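/- Let n ≥ 2 and let M' be the n-state modified Moore automaton over {a, b, c}. Then the subset complexity of M' satisfies ‖M'‖ ≤ 3n² + 3n. In particular, the DFA produced by the subset construction on M' has at most 3n² + 3n states. -/

import Mathlib

/-- The three-letter alphabet `{a, b, c}`. -/
inductive ABC : Type
  | a : ABC
  | b : ABC
  | c : ABC
deriving DecidableEq

instance : Fintype ABC where
  elems := {ABC.a, ABC.b, ABC.c}
  complete := by intro x; cases x <;> simp

/-- The `n`-state modified Moore automaton over `{a,b,c}`: states `{1, …, n}` are
represented by `Fin n` (`q : Fin n` stands for state `q.val + 1`).  Transitions: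
`1 —b→ 1`, `1 —a→ 2`, `i —a→ i+1` and `i —b→ i+1` for `2 ≤ i ≤ n-1`, and `n —c→ 1`,
`n —c→ 2` (the two transitions out of state `n` are relabelled with the fresh symbol
`c`).  Start state `1`, accepting state `n`. -/
def modMooreNFA (n : ℕ) : NFA ABC (Fin n) where
  step q x :=
    { p | (q.val = 0 ∧ x = ABC.b ∧ p.val = 0) ∨
          (q.val = 0 ∧ x = ABC.a ∧ p.val = 1) ∨
          (1 ≤ q.val ∧ q.val + 1 ≤ n - 1 ∧ (x = ABC.a ∨ x = ABC.b) ∧ p.val = q.val + 1) ∨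
          (q.val = n - 1 ∧ x = ABC.c ∧ (p.val = 0 ∨ p.val = 1)) }
  start := { q | q.val = 0 }
  accept := { q | q.val = n - 1 }

/-- The subset complexity of an NFA `M`:
`‖M‖ = min over J ⊆ Σ of (1 + ∑_{a ∈ Σ∖J} |Set.range T_a|) * |M(J)|`, where
`T_a S = M.stepSet S a` and `M(J)` is the transition monoid (submonoid of self-maps of
`Set σ` under composition) generated by `{T_a | a ∈ J}`. -/
noncomputable def subsetComplexity {α σ : Type} [Fintype α] [DecidableEq α] [Fintype σ]
    (M : NFA α σ) : ℕ :=
  ⨅ J : Finset α,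
    (1 + ∑ a ∈ Jᶜ, (Set.range fun S : Set σ => M.stepSet S a).ncard) *
      Nat.card (Submonoid.closure
        { f : Function.End (Set σ) | ∃ a ∈ J, f = fun S => M.stepSet S a })

/-- auxiliary family of maps -/
def Fmap (n k : ℕ) (o : Option ℕ) : Function.End (Set (Fin n)) :=
  fun S => {p | (∃ q ∈ S, 1 ≤ q.val ∧ p.val = q.val + k ∧ q.val + k ≤ n - 1) ∨
                ((∃ q ∈ S, q.val = 0) ∧ ∃ j, o = some j ∧ j ≤ n - 1 ∧ p.val = j)}

lemma mem_Fmap {n k : ℕ} {o : Option ℕ} {S : Set (Fin n)} {p : Fin n} :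
    p ∈ Fmap n k o S ↔
      (∃ q ∈ S, 1 ≤ q.val ∧ p.val = q.val + k ∧ q.val + k ≤ n - 1) ∨
      ((∃ q ∈ S, q.val = 0) ∧ ∃ j, o = some j ∧ j ≤ n - 1 ∧ p.val = j) := Iff.rfl

lemma Fmap_one {n : ℕ} (hn : 1 ≤ n) : Fmap n 0 (some 0) = 1 := by
  funext S
  ext p
  simp only [mem_Fmap, Option.some.injEq]
  constructor
  · rintro (⟨q, hq, h1, h2, h3⟩ | ⟨⟨q, hq, h0⟩, j, hj, hjn, hp⟩)
    · have : p = q := Fin.ext (by omega)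
      exact this ▸ hq
    · have : p = q := Fin.ext (by omega)
      exact this ▸ hq
  · intro hp
    by_cases h0 : p.val = 0
    · exact Or.inr ⟨⟨p, hp, h0⟩, 0, rfl, by omega, h0⟩
    · exact Or.inl ⟨p, hp, by omega, by omega, by have := p.isLt; omega⟩

lemma Fmap_Ta {n : ℕ} (hn : 2 ≤ n) :
    (fun S => (modMooreNFA n).stepSet S ABC.a) = Fmap n 1 (some 1) := by
  funext S
  ext p
  rw [NFA.mem_stepSet, mem_Fmap]
  simp only [modMooreNFA, Set.mem_setOf_eq, Option.some.injEq]
  constructor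
  · rintro ⟨q, hq, (⟨_, h, _⟩ | ⟨h0, _, hp⟩ | ⟨h1, h2, _, hp⟩ | ⟨_, h, _⟩)⟩
    · exact absurd h (by simp)
    · exact Or.inr ⟨⟨q, hq, h0⟩, 1, rfl, by omega, hp⟩
    · exact Or.inl ⟨q, hq, h1, hp, h2⟩
    · exact absurd h (by simp)
  · rintro (⟨q, hq, h1, h2, h3⟩ | ⟨⟨q, hq, h0⟩, j, hj, hjn, hp⟩)
    · exact ⟨q, hq, Or.inr (Or.inr (Or.inl ⟨h1, h3, Or.inl trivial, h2⟩))⟩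
    · obtain rfl : j = 1 := hj.symm
      exact ⟨q, hq, Or.inr (Or.inl ⟨h0, trivial, hp⟩)⟩

lemma Fmap_Tb {n : ℕ} (hn : 2 ≤ n) :
    (fun S => (modMooreNFA n).stepSet S ABC.b) = Fmap n 1 (some 0) := by
  funext S
  ext p
  rw [NFA.mem_stepSet, mem_Fmap]
  simp only [modMooreNFA, Set.mem_setOf_eq, Option.some.injEq]
  constructor
  · rintro ⟨q, hq, (⟨h0, _, hp⟩ | ⟨_, h, _⟩ | ⟨h1, h2, _, hp⟩ | ⟨_, h, _⟩)⟩
    · exact Or.inr ⟨⟨q, hq, h0⟩, 0, rfl, by omega, hp⟩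
    · exact absurd h (by simp)
    · exact Or.inl ⟨q, hq, h1, hp, h2⟩
    · exact absurd h (by simp)
  · rintro (⟨q, hq, h1, h2, h3⟩ | ⟨⟨q, hq, h0⟩, j, hj, hjn, hp⟩)
    · exact ⟨q, hq, Or.inr (Or.inr (Or.inl ⟨h1, h3, Or.inr trivial, h2⟩))⟩
    · obtain rfl : j = 0 := hj.symm
      exact ⟨q, hq, Or.inl ⟨h0, trivial, hp⟩⟩

/-- composite parameter -/
def ocomp (n k : ℕ) (o o' : Option ℕ) : Option ℕ :=
  match o' with
  | none => none
  | some j => if j = 0 then o else if j ≤ n - 1 then some (j + k) else none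

lemma Fmap_mul {n : ℕ} (hn : 1 ≤ n) (k k' : ℕ) (o o' : Option ℕ) :
    Fmap n k o * Fmap n k' o' = Fmap n (k + k') (ocomp n k o o') := by
  funext S
  ext p
  show p ∈ Fmap n k o (Fmap n k' o' S) ↔ _
  rw [mem_Fmap, mem_Fmap]
  constructor
  · rintro (⟨q', hq', h1, h2, h3⟩ | ⟨⟨q', hq', h0⟩, i, hi, hin, hp⟩)
    · rw [mem_Fmap] at hq'
      rcases hq' with ⟨q, hq, g1, g2, g3⟩ | ⟨⟨q, hq, g0⟩, j, hj, hjn, gp⟩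
      · exact Or.inl ⟨q, hq, g1, by omega, by omega⟩
      · obtain rfl := hj
        refine Or.inr ⟨⟨q, hq, g0⟩, j + k, ?_, by omega, by omega⟩
        simp only [ocomp]
        rw [if_neg (by omega), if_pos hjn]
    · rw [mem_Fmap] at hq'
      rcases hq' with ⟨q, hq, g1, g2, g3⟩ | ⟨⟨q, hq, g0⟩, j, hj, hjn, gp⟩
      · omega
      · obtain rfl := hj
        obtain rfl : j = 0 := by omega
        refine Or.inr ⟨⟨q, hq, g0⟩, i, ?_, hin, hp⟩
        simp only [ocomp, if_pos rfl]
        exact hi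
  · rintro (⟨q, hq, h1, h2, h3⟩ | ⟨⟨q, hq, h0⟩, i, hi, hin, hp⟩)
    · refine Or.inl ⟨⟨q.val + k', by omega⟩, ?_, by simp; omega, by simp; omega, by simp; omega⟩
      rw [mem_Fmap]
      exact Or.inl ⟨q, hq, h1, rfl, by omega⟩
    · rcases o' with _ | j
    -- o' = none : ocomp = none, contradiction
      · simp [ocomp] at hi
      · by_cases hj0 : j = 0
        · subst hj0
          simp only [ocomp, if_pos rfl] at hi
          refine Or.inr ⟨⟨⟨0, by omega⟩, ?_, rfl⟩, i, hi, hin, hp⟩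
          rw [mem_Fmap]
          exact Or.inr ⟨⟨q, hq, h0⟩, 0, rfl, by omega, rfl⟩
        · by_cases hjn : j ≤ n - 1
          · simp only [ocomp, if_neg hj0, if_pos hjn, Option.some.injEq] at hi
            refine Or.inl ⟨⟨j, by omega⟩, ?_, by simp; omega, by simp; omega, by simp; omega⟩
            rw [mem_Fmap]
            exact Or.inr ⟨⟨q, hq, h0⟩, j, rfl, hjn, rfl⟩
          · simp [ocomp, if_neg hj0, if_neg hjn] at hi

lemma Fmap_norm {n : ℕ} (hn : 1 ≤ n) (k : ℕ) (o : Option ℕ) :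
    ∃ k₂ < n, ∃ o₂ : Option ℕ, (∀ j ∈ o₂, j < n) ∧ Fmap n k o = Fmap n k₂ o₂ := by
  refine ⟨min k (n - 1), by omega, ?_⟩
  refine ⟨match o with | none => none | some j => if j ≤ n - 1 then some j else none, ?_, ?_⟩
  · rcases o with _ | j
    · simp
    · intro i hi
      simp only at hi
      split at hi
      · simp only [Option.mem_def, Option.some.injEq] at hi
        omega
      · simp at hi
  · funext S
    ext p
    rw [mem_Fmap, mem_Fmap]
    constructor
    · rintro (⟨q, hq, h1, h2, h3⟩ | ⟨h0, j, hj, hjn, hp⟩)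
      · exact Or.inl ⟨q, hq, h1, by omega, by omega⟩
      · refine Or.inr ⟨h0, j, ?_, hjn, hp⟩
        subst hj
        simp [if_pos hjn]
    · rintro (⟨q, hq, h1, h2, h3⟩ | ⟨h0, j, hj, hjn, hp⟩)
      · exact Or.inl ⟨q, hq, h1, by omega, by omega⟩
      · refine Or.inr ⟨h0, j, ?_, hjn, hp⟩
        rcases o with _ | i
        · simp at hj
        · simp only at hj
          split at hj
          · exact hj
          · simp at hj

/-- the bounding submonoid -/
def Gmon (n : ℕ) (hn : 1 ≤ n) : Submonoid (Function.End (Set (Fin n))) where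
  carrier := {f | ∃ k < n, ∃ o : Option ℕ, (∀ j ∈ o, j < n) ∧ f = Fmap n k o}
  one_mem' := ⟨0, by omega, some 0, by simp; omega, (Fmap_one hn).symm⟩
  mul_mem' := by
    rintro f g ⟨k, hk, o, ho, rfl⟩ ⟨k', hk', o', ho', rfl⟩
    rw [Fmap_mul hn]
    obtain ⟨k₂, hk₂, o₂, ho₂, he⟩ := Fmap_norm hn (k + k') (ocomp n k o o')
    exact ⟨k₂, hk₂, o₂, ho₂, he⟩

lemma card_Gmon {n : ℕ} (hn : 1 ≤ n) :
    Nat.card (Gmon n hn : Set (Function.End (Set (Fin n)))) ≤ n * (n + 1) := by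
  classical
  set h : Fin n × Option (Fin n) → Function.End (Set (Fin n)) :=
    fun pr => Fmap n pr.1.val (pr.2.map Fin.val) with hh
  have hsub : (Gmon n hn : Set (Function.End (Set (Fin n)))) ⊆ Set.range h := by
    rintro f ⟨k, hk, o, ho, rfl⟩
    rcases o with _ | j
    · exact ⟨(⟨k, hk⟩, none), rfl⟩
    · exact ⟨(⟨k, hk⟩, some ⟨j, ho j rfl⟩), rfl⟩
  calc Nat.card (Gmon n hn : Set (Function.End (Set (Fin n))))
      ≤ Nat.card (Set.range h) := Nat.card_mono (Set.toFinite _) hsub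
    _ ≤ Nat.card (Fin n × Option (Fin n)) :=
        Nat.card_le_card_of_surjective _ Set.rangeFactorization_surjective
    _ = n * (n + 1) := by simp [Nat.card_eq_fintype_card]

lemma stepSet_ncard_le {n : ℕ} (hn : 2 ≤ n) (S : Set (Fin n)) (hS : S.ncard ≤ 2) (x : ABC) :
    ((modMooreNFA n).stepSet S x).ncard ≤ 2 := by
  have hstep : ∀ y : ABC, y ≠ ABC.c →
      (modMooreNFA n).stepSet S y ⊆
        (fun q : Fin n => if q.val = 0 ∧ y = ABC.b then q
          else ⟨(q.val + 1) % n, Nat.mod_lt _ (by omega)⟩) '' S := by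
    intro y hy p hp
    rw [NFA.mem_stepSet] at hp
    obtain ⟨q, hq, hstep⟩ := hp
    refine ⟨q, hq, ?_⟩
    beta_reduce
    simp only [modMooreNFA, Set.mem_setOf_eq] at hstep
    rcases hstep with ⟨h0, hb, hp0⟩ | ⟨h0, ha, hp1⟩ | ⟨h1, h2, _, hp⟩ | ⟨_, hc, _⟩
    · rw [if_pos ⟨h0, hb⟩]
      exact Fin.ext (by omega)
    · subst ha
      rw [if_neg (by rintro ⟨_, h⟩; cases h)]
      apply Fin.ext
      simp only
      rw [Nat.mod_eq_of_lt (by omega)]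
      omega
    · rw [if_neg (by rintro ⟨h, _⟩; omega)]
      apply Fin.ext
      simp only
      rw [Nat.mod_eq_of_lt (by omega)]
      omega
    · exact absurd hc hy
  rcases x with _ | _ | _
  · calc ((modMooreNFA n).stepSet S ABC.a).ncard ≤ (_ '' S).ncard :=
          Set.ncard_le_ncard (hstep ABC.a (by simp)) (Set.toFinite _)
      _ ≤ S.ncard := Set.ncard_image_le (Set.toFinite _)
      _ ≤ 2 := hS
  · calc ((modMooreNFA n).stepSet S ABC.b).ncard ≤ (_ '' S).ncard :=
          Set.ncard_le_ncard (hstep ABC.b (by simp)) (Set.toFinite _)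
      _ ≤ S.ncard := Set.ncard_image_le (Set.toFinite _)
      _ ≤ 2 := hS
  · have hsub : (modMooreNFA n).stepSet S ABC.c ⊆
        {(⟨0, by omega⟩ : Fin n), ⟨1, by omega⟩} := by
      intro p hp
      rw [NFA.mem_stepSet] at hp
      obtain ⟨q, hq, hstep⟩ := hp
      simp only [modMooreNFA, Set.mem_setOf_eq] at hstep
      rcases hstep with ⟨_, hb, _⟩ | ⟨_, ha, _⟩ | ⟨_, _, hab, _⟩ | ⟨_, _, hp01⟩
      · cases hb
      · cases ha
      · rcases hab with h | h <;> cases h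
      · rcases hp01 with h | h
        · exact Or.inl (Fin.ext (by simpa using h))
        · exact Or.inr (Fin.ext (by simpa using h))
    calc ((modMooreNFA n).stepSet S ABC.c).ncard
        ≤ ({(⟨0, by omega⟩ : Fin n), ⟨1, by omega⟩} : Set (Fin n)).ncard :=
          Set.ncard_le_ncard hsub (Set.toFinite _)
      _ ≤ 1 + 1 := le_trans (Set.ncard_insert_le _ _) (by simp [Set.ncard_singleton])
      _ ≤ 2 := by omega

lemma reach_ncard_le {n : ℕ} (hn : 2 ≤ n) (w : List ABC) :
    ((modMooreNFA n).evalFrom (modMooreNFA n).start w).ncard ≤ 2 := by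
  have hstart : ((modMooreNFA n).start).ncard ≤ 2 := by
    have : (modMooreNFA n).start = {(⟨0, by omega⟩ : Fin n)} := by
      ext q
      simp only [modMooreNFA, Set.mem_setOf_eq, Set.mem_singleton_iff]
      constructor
      · intro h; exact Fin.ext (by simpa using h)
      · rintro rfl; rfl
    rw [this, Set.ncard_singleton]
    omega
  have key : ∀ (w : List ABC) (S : Set (Fin n)), S.ncard ≤ 2 →
      (List.foldl (modMooreNFA n).stepSet S w).ncard ≤ 2 := by
    intro w
    induction w with
    | nil => intro S hS; exact hS
    | cons x t ih =>
      intro S hS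
      exact ih _ (stepSet_ncard_le hn S hS x)
  exact key w _ hstart

lemma card_small_sets {n : ℕ} :
    Nat.card {S : Set (Fin n) | S.ncard ≤ 2} ≤ (n + 1) * (n + 1) := by
  classical
  set g : Option (Fin n) × Option (Fin n) → Set (Fin n) :=
    fun pr => (pr.1.elim ∅ fun x => {x}) ∪ (pr.2.elim ∅ fun x => {x}) with hg
  have hsub : {S : Set (Fin n) | S.ncard ≤ 2} ⊆ Set.range g := by
    intro S hS
    simp only [Set.mem_setOf_eq] at hS
    interval_cases h : S.ncard
    · obtain rfl : S = ∅ := (Set.ncard_eq_zero (Set.toFinite S)).mp h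
      exact ⟨(none, none), by simp [hg]⟩
    · obtain ⟨x, rfl⟩ := Set.ncard_eq_one.mp h
      exact ⟨(some x, none), by simp [hg]⟩
    · obtain ⟨x, y, -, rfl⟩ := Set.ncard_eq_two.mp h
      refine ⟨(some x, some y), ?_⟩
      simp only [hg, Option.elim]
      rw [Set.singleton_union]
  calc Nat.card {S : Set (Fin n) | S.ncard ≤ 2}
      ≤ Nat.card (Set.range g) := Nat.card_mono (Set.toFinite _) hsub
    _ ≤ Nat.card (Option (Fin n) × Option (Fin n)) :=
        Nat.card_le_card_of_surjective _ Set.rangeFactorization_surjective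
    _ = (n + 1) * (n + 1) := by simp [Nat.card_eq_fintype_card, mul_comm]


/-- for the `n`-state modified Moore automaton (`n ≥ 2`), the subset
complexity is at most `3n² + 3n`; in particular the subset-construction DFA has at
most `3n² + 3n` (accessible) states. -/
theorem modified_moore_subset_complexity (n : ℕ) (hn : 2 ≤ n) :
    subsetComplexity (modMooreNFA n) ≤ 3 * n ^ 2 + 3 * n ∧
    (Set.range fun w : List ABC =>
        (modMooreNFA n).evalFrom (modMooreNFA n).start w).ncard ≤ 3 * n ^ 2 + 3 * n := by
  classical
  have hn1 : 1 ≤ n := by omega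
  constructor
  · -- part 1
    set J : Finset ABC := {ABC.a, ABC.b} with hJ
    have step1 : subsetComplexity (modMooreNFA n) ≤
        (1 + ∑ a ∈ Jᶜ, (Set.range fun S : Set (Fin n) => (modMooreNFA n).stepSet S a).ncard) *
          Nat.card (Submonoid.closure
            { f : Function.End (Set (Fin n)) | ∃ a ∈ J, f = fun S => (modMooreNFA n).stepSet S a }) := by
      exact ciInf_le (OrderBot.bddBelow _) J
    have hJc : Jᶜ = ({ABC.c} : Finset ABC) := by decide
    rw [hJc, Finset.sum_singleton] at step1
    -- bound the range of T_c
    have hrangec : (Set.range fun S : Set (Fin n) => (modMooreNFA n).stepSet S ABC.c).ncard ≤ 2 := by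
      have hsub : (Set.range fun S : Set (Fin n) => (modMooreNFA n).stepSet S ABC.c) ⊆
          {(∅ : Set (Fin n)), {p : Fin n | p.val = 0 ∨ p.val = 1}} := by
        rintro _ ⟨S, rfl⟩
        by_cases h : ∃ q ∈ S, q.val = n - 1
        · right
          ext p
          rw [NFA.mem_stepSet]
          simp only [modMooreNFA, Set.mem_setOf_eq]
          constructor
          · rintro ⟨q, hq, (⟨_, hb, _⟩ | ⟨_, ha, _⟩ | ⟨_, _, hab, _⟩ | ⟨_, _, hp⟩)⟩
            · cases hb
            · cases ha
            · rcases hab with hh | hh <;> cases hh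
            · exact hp
          · intro hp
            obtain ⟨q, hq, hqn⟩ := h
            exact ⟨q, hq, Or.inr (Or.inr (Or.inr ⟨hqn, trivial, hp⟩))⟩
        · left
          ext p
          rw [NFA.mem_stepSet]
          simp only [modMooreNFA, Set.mem_setOf_eq, Set.mem_empty_iff_false, iff_false]
          rintro ⟨q, hq, (⟨_, hb, _⟩ | ⟨_, ha, _⟩ | ⟨_, _, hab, _⟩ | ⟨hqn, _, _⟩)⟩
          · cases hb
          · cases ha
          · rcases hab with hh | hh <;> cases hh
          · exact h ⟨q, hq, hqn⟩
      calc (Set.range fun S : Set (Fin n) => (modMooreNFA n).stepSet S ABC.c).ncard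
          ≤ ({(∅ : Set (Fin n)), {p : Fin n | p.val = 0 ∨ p.val = 1}} : Set (Set (Fin n))).ncard :=
            Set.ncard_le_ncard hsub (Set.toFinite _)
        _ ≤ 1 + 1 := le_trans (Set.ncard_insert_le _ _) (by simp [Set.ncard_singleton])
        _ ≤ 2 := by omega
    -- bound the monoid
    have hmon : Nat.card (Submonoid.closure
        { f : Function.End (Set (Fin n)) | ∃ a ∈ J, f = fun S => (modMooreNFA n).stepSet S a }) ≤
        n * (n + 1) := by
      have hgens : { f : Function.End (Set (Fin n)) | ∃ a ∈ J, f = fun S => (modMooreNFA n).stepSet S a }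
          ⊆ (Gmon n hn1 : Set (Function.End (Set (Fin n)))) := by
        rintro f ⟨x, hx, rfl⟩
        have hx' : x = ABC.a ∨ x = ABC.b := by
          rw [hJ] at hx
          simpa using hx
        rcases hx' with rfl | rfl
        · exact ⟨1, by omega, some 1, by simp; omega, Fmap_Ta hn⟩
        · exact ⟨1, by omega, some 0, by simp; omega, Fmap_Tb hn⟩
      have hle : Submonoid.closure
          { f : Function.End (Set (Fin n)) | ∃ a ∈ J, f = fun S => (modMooreNFA n).stepSet S a }
          ≤ Gmon n hn1 := Submonoid.closure_le.mpr hgens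
      calc Nat.card (Submonoid.closure
            { f : Function.End (Set (Fin n)) | ∃ a ∈ J, f = fun S => (modMooreNFA n).stepSet S a })
          ≤ Nat.card (Gmon n hn1 : Set (Function.End (Set (Fin n)))) := by
            haveI : Finite (Function.End (Set (Fin n))) :=
              inferInstanceAs (Finite (Set (Fin n) → Set (Fin n)))
            exact Nat.card_mono (Set.toFinite _) hle
        _ ≤ n * (n + 1) := card_Gmon hn1
    calc subsetComplexity (modMooreNFA n)
        ≤ (1 + (Set.range fun S : Set (Fin n) => (modMooreNFA n).stepSet S ABC.c).ncard) *
            Nat.card (Submonoid.closure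
              { f : Function.End (Set (Fin n)) | ∃ a ∈ J, f = fun S => (modMooreNFA n).stepSet S a }) :=
          step1
      _ ≤ (1 + 2) * (n * (n + 1)) := Nat.mul_le_mul (by omega) hmon
      _ = 3 * n ^ 2 + 3 * n := by ring
  · -- part 2
    have hsub : (Set.range fun w : List ABC =>
        (modMooreNFA n).evalFrom (modMooreNFA n).start w) ⊆ {S : Set (Fin n) | S.ncard ≤ 2} := by
      rintro _ ⟨w, rfl⟩
      exact reach_ncard_le hn w
    calc (Set.range fun w : List ABC =>
          (modMooreNFA n).evalFrom (modMooreNFA n).start w).ncard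
        ≤ Nat.card {S : Set (Fin n) | S.ncard ≤ 2} := Nat.card_mono (Set.toFinite _) hsub
      _ ≤ (n + 1) * (n + 1) := card_small_sets
      _ ≤ 3 * n ^ 2 + 3 * n := by nlinarith
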